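/- arXiv:1305.5460 — 9 statements merged into one kernel-verified Lean document; each statement's English description precedes it below -/
import Mathlib

section
/- Let S = M^1_{\geq 0} \times \cdots \times M^d_{\geq 0} with each M^i a nonzero subgroup of \mathbb{R}. Call an ideal set P \subsetneq S 'm-prime' if for all f, g \in S, f + g \in P implies f \in P or g \in P. Then P is m-prime if and only if there is a subset T \subseteq {1,...,d} such that P = Q_T := { s \in S : s_i > 0 for some i \in T }. -/
/-- The semigroup `S = M^1_{≥0} × ⋯ × M^d_{≥0}`, realized as a subset of `Fin d → ℝ`. -/
def Sset {d : ℕ} (M : Fin d → AddSubgroup ℝ) : Set (Fin d → ℝ) :=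
  {s | ∀ i, s i ∈ M i ∧ 0 ≤ s i}

/-- The "monomial ideal set" (up-set) generated by `T ⊆ S`. -/
def Up {d : ℕ} (M : Fin d → AddSubgroup ℝ) (T : Set (Fin d → ℝ)) : Set (Fin d → ℝ) :=
  {s | ∃ t ∈ T, ∃ u ∈ Sset M, s = t + u}

/-- An ideal set of `S`: a subset of `S` closed under adding arbitrary elements of `S`. -/
def IsIdealSet {d : ℕ} (M : Fin d → AddSubgroup ℝ) (I : Set (Fin d → ℝ)) : Prop :=
  I ⊆ Sset M ∧ ∀ s ∈ I, ∀ u ∈ Sset M, s + u ∈ I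

/-- The m-prime ideal set `Q_T = {s ∈ S | s i > 0 for some i ∈ T}`. -/
def QT {d : ℕ} (M : Fin d → AddSubgroup ℝ) (T : Finset (Fin d)) : Set (Fin d → ℝ) :=
  {s ∈ Sset M | ∃ i ∈ T, 0 < s i}

/-- An m-prime ideal set: a proper ideal set `P` with `f + g ∈ P → f ∈ P ∨ g ∈ P`. -/
def IsMPrime {d : ℕ} (M : Fin d → AddSubgroup ℝ) (P : Set (Fin d → ℝ)) : Prop :=
  IsIdealSet M P ∧ P ≠ Sset M ∧
    ∀ f ∈ Sset M, ∀ g ∈ Sset M, f + g ∈ P → f ∈ P ∨ g ∈ P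

/-- An m-irreducible ideal set. -/
def MIrred {d : ℕ} (M : Fin d → AddSubgroup ℝ) (I : Set (Fin d → ℝ)) : Prop :=
  IsIdealSet M I ∧ I ≠ Sset M ∧
    ∀ J K : Set (Fin d → ℝ), IsIdealSet M J → IsIdealSet M K → I = J ∩ K → I = J ∨ I = K

/-- Monomial Krull dimension: `sup {d - |T| : Q_T ⊇ I}` (m-primes are exactly the `Q_T`). -/
noncomputable def mdim {d : ℕ} (M : Fin d → AddSubgroup ℝ) (I : Set (Fin d → ℝ)) : ℕ :=
  sSup {n : ℕ | ∃ T : Finset (Fin d), I ⊆ QT M T ∧ n = d - T.card}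

/-- Euclidean distance between exponent vectors. -/
noncomputable def myDist {d : ℕ} (γ δ : Fin d → ℝ) : ℝ :=
  Real.sqrt (∑ i, (γ i - δ i) ^ 2)

/-- `dist(I,J) < ε` in the sense of Definition 4.5 of the paper. -/
def DistLT {d : ℕ} (ε : ℝ) (I J : Set (Fin d → ℝ)) : Prop :=
  (∀ γ ∈ I, ∃ δ ∈ J, myDist γ δ < ε) ∧ (∀ δ ∈ J, ∃ γ ∈ I, myDist γ δ < ε)

/-- Distance between ideal sets (Definition 4.6). -/
noncomputable def idealDist {d : ℕ} (I J : Set (Fin d → ℝ)) : ℝ :=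
  sInf {ε : ℝ | 0 < ε ∧ DistLT ε I J}

/-- Finitely generated ideal set. -/
def IsFG {d : ℕ} (M : Fin d → AddSubgroup ℝ) (I : Set (Fin d → ℝ)) : Prop :=
  ∃ G : Finset (Fin d → ℝ), ↑G ⊆ Sset M ∧ I = Up M ↑G

/-! A prime ideal set `P` is determined by which coordinate axes it meets. Writing `s ∈ S` as the
sum of its coordinate vectors `s i • eᵢ`, primality puts one of them in `P`, and `s i > 0` because
`0 ∉ P`. By the Archimedean property some multiple of any `y • eᵢ` with `y > 0` lies above
`s i • eᵢ`, so it is in `P`, and primality again gives `y • eᵢ ∈ P`. Hence `P = Q_T` where `T` is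
the set of axes meeting `P`. -/

section

variable {d : ℕ} {M : Fin d → AddSubgroup ℝ}

def Sset.addSubmonoid (M : Fin d → AddSubgroup ℝ) : AddSubmonoid (Fin d → ℝ) where
  carrier := Sset M
  zero_mem' _ := ⟨zero_mem _, le_rfl⟩
  add_mem' hf hg i := ⟨add_mem (hf i).1 (hg i).1, add_nonneg (hf i).2 (hg i).2⟩

theorem zero_mem_Sset : (0 : Fin d → ℝ) ∈ Sset M :=
  (Sset.addSubmonoid M).zero_mem

theorem single_mem_Sset_iff {i : Fin d} {x : ℝ} :
    Pi.single i x ∈ Sset M ↔ x ∈ M i ∧ 0 ≤ x := by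
  refine ⟨fun h => by simpa using h i, fun hx j => ?_⟩
  rcases eq_or_ne j i with rfl | hji
  · simpa using hx
  · simp [Pi.single_eq_of_ne hji]

theorem sub_single_mem_Sset {s : Fin d → ℝ} (hs : s ∈ Sset M) (i : Fin d) :
    s - Pi.single i (s i) ∈ Sset M := by
  intro j
  rcases eq_or_ne j i with rfl | hji
  · simp
  · simpa [Pi.single_eq_of_ne hji] using hs j

theorem IsIdealSet.mem_of_sub_mem {I : Set (Fin d → ℝ)} (hI : IsIdealSet M I)
    {s t : Fin d → ℝ} (ht : t ∈ I) (hst : s - t ∈ Sset M) : s ∈ I := by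
  simpa using hI.2 t ht (s - t) hst

namespace IsMPrime

variable {P : Set (Fin d → ℝ)}

theorem zero_notMem (hP : IsMPrime M P) : (0 : Fin d → ℝ) ∉ P := fun h0 =>
  hP.2.1 (hP.1.1.antisymm fun u hu => by simpa using hP.1.2 0 h0 u hu)

theorem mem_of_nsmul_mem (hP : IsMPrime M P) {f : Fin d → ℝ} (hf : f ∈ Sset M) {n : ℕ}
    (hn : n ≠ 0) (h : n • f ∈ P) : f ∈ P := by
  induction n with
  | zero => exact absurd rfl hn
  | succ n ih =>
    rcases eq_or_ne n 0 with rfl | hn'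
    · simpa using h
    rw [succ_nsmul] at h
    exact (hP.2.2 _ ((Sset.addSubmonoid M).nsmul_mem hf n) f hf h).elim (ih hn') id

theorem exists_mem_of_sum_mem {ι : Type*} (hP : IsMPrime M P) (A : Finset ι)
    {f : ι → Fin d → ℝ} (hf : ∀ i ∈ A, f i ∈ Sset M) (h : ∑ i ∈ A, f i ∈ P) :
    ∃ i ∈ A, f i ∈ P := by
  classical
  induction A using Finset.induction_on with
  | empty => exact absurd h (by simpa using hP.zero_notMem)
  | insert j A hj ih =>
    rw [Finset.sum_insert hj] at h
    have hfA : ∀ i ∈ A, f i ∈ Sset M := fun i hi => hf i (Finset.mem_insert_of_mem hi)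
    rcases hP.2.2 _ (hf j (Finset.mem_insert_self j A)) _
        ((Sset.addSubmonoid M).sum_mem hfA) h with hjP | hAP
    · exact ⟨j, Finset.mem_insert_self j A, hjP⟩
    · obtain ⟨i, hi, hiP⟩ := ih hfA hAP
      exact ⟨i, Finset.mem_insert_of_mem hi, hiP⟩

theorem single_mem_of_single_mem (hP : IsMPrime M P) {i : Fin d} {x y : ℝ}
    (hx : Pi.single i x ∈ P) (hyM : y ∈ M i) (hy : 0 < y) : Pi.single i y ∈ P := by
  obtain ⟨n, hn⟩ := Archimedean.arch x hy
  have hxM : x ∈ M i := (single_mem_Sset_iff.1 (hP.1.1 hx)).1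
  have hnP : n • Pi.single i y ∈ P := by
    refine hP.1.mem_of_sub_mem hx ?_
    rw [← Pi.single_nsmul, ← Pi.single_sub]
    exact single_mem_Sset_iff.2 ⟨sub_mem (nsmul_mem hyM n) hxM, sub_nonneg.2 hn⟩
  refine hP.mem_of_nsmul_mem (single_mem_Sset_iff.2 ⟨hyM, hy.le⟩) (fun hn0 => ?_) hnP
  exact hP.zero_notMem (by simpa [hn0] using hnP)

theorem exists_eq_QT (hP : IsMPrime M P) : ∃ T : Finset (Fin d), P = QT M T := by
  classical
  refine ⟨Finset.univ.filter fun i => ∃ x, Pi.single i x ∈ P, Set.ext fun s => ⟨fun hs => ?_, ?_⟩⟩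
  · have hsS : s ∈ Sset M := hP.1.1 hs
    obtain ⟨i, -, hi⟩ := hP.exists_mem_of_sum_mem Finset.univ
      (fun i _ => single_mem_Sset_iff.2 (hsS i)) (by rwa [Finset.univ_sum_single])
    refine ⟨hsS, i, by simpa using ⟨_, hi⟩, (hsS i).2.lt_of_ne fun h => hP.zero_notMem ?_⟩
    rwa [← h, Pi.single_zero] at hi
  · rintro ⟨hsS, i, hiT, hsi⟩
    obtain ⟨x, hx⟩ := (Finset.mem_filter.1 hiT).2
    exact hP.1.mem_of_sub_mem (hP.single_mem_of_single_mem hx (hsS i).1 hsi)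
      (sub_single_mem_Sset hsS i)

end IsMPrime

theorem isMPrime_QT (T : Finset (Fin d)) : IsMPrime M (QT M T) := by
  refine ⟨⟨fun s hs => hs.1, ?_⟩, fun h => ?_, ?_⟩
  · rintro s ⟨hs, i, hi, hsi⟩ u hu
    exact ⟨(Sset.addSubmonoid M).add_mem hs hu, i, hi, add_pos_of_pos_of_nonneg hsi (hu i).2⟩
  · obtain ⟨-, i, -, hi⟩ : (0 : Fin d → ℝ) ∈ QT M T := h ▸ zero_mem_Sset
    exact hi.false
  · rintro f hf g hg ⟨-, i, hi, hfg⟩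
    rcases (hf i).2.lt_or_eq with hfi | hfi
    · exact Or.inl ⟨hf, i, hi, hfi⟩
    · exact Or.inr ⟨hg, i, hi, by simpa [← hfi] using hfg⟩

end

theorem stmt4_general (d : ℕ) (M : Fin d → AddSubgroup ℝ)
    (P : Set (Fin d → ℝ)) (hP : IsIdealSet M P) :
    (P ≠ Sset M ∧ ∀ f ∈ Sset M, ∀ g ∈ Sset M, f + g ∈ P → f ∈ P ∨ g ∈ P)
      ↔ ∃ T : Finset (Fin d), P = QT M T := by
  refine ⟨fun h => IsMPrime.exists_eq_QT ⟨hP, h⟩, ?_⟩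
  rintro ⟨T, rfl⟩
  exact (isMPrime_QT T).2

/-- an ideal set is m-prime iff it is `Q_T` for some `T ⊆ {1,…,d}`. -/
theorem stmt4 (d : ℕ) (M : Fin d → AddSubgroup ℝ) (hM : ∀ i, M i ≠ ⊥)
    (P : Set (Fin d → ℝ)) (hP : IsIdealSet M P) :
    (P ≠ Sset M ∧ ∀ f ∈ Sset M, ∀ g ∈ Sset M, f + g ∈ P → f ∈ P ∨ g ∈ P)
      ↔ ∃ T : Finset (Fin d), P = QT M T :=
  stmt4_general d M P hP
end

section
/- Let S = M^1_{\geq 0} \times \cdots \times M^d_{\geq 0}. An ideal set I \subsetneq S is called m-irreducible if whenever I = J \cap K for ideal sets J, K, one has I = J or I = K. Suppose I = \bigcap_{i=1}^m P_i = \bigcap_{j=1}^n Q_j are two irredundant finite intersections of m-irreducible ideal sets (irredundant meaning no P_i contains another P_{i'}, i \neq i', and similarly for the Q_j). Then {P_1, ..., P_m} = {Q_1, ..., Q_n} as sets, and m = n. -/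
/-!
Ideal sets of `S` form a sublattice of the lattice of subsets, with top `S`, so they form a
distributive lattice, and m-irreducibility is inf-irreducibility there. In a distributive lattice
inf-irreducible elements are inf-prime, so each `P i ⊇ ⋂ j, Q j` contains some `Q j`, which in turn
contains some `P i'`; irredundancy forces `i' = i`, hence `P i = Q j`.
-/

open Finset

section DistribLattice

variable {α ι κ : Type*} [DistribLattice α] [OrderTop α] [Fintype ι] [Fintype κ]

theorem range_subset_of_inf_eq_of_infIrred {P : ι → α} {Q : κ → α}
    (hP : ∀ i, InfIrred (P i)) (hQ : ∀ j, InfIrred (Q j))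
    (hPirr : ∀ i i', i ≠ i' → ¬ P i ≤ P i') (heq : univ.inf P = univ.inf Q) :
    Set.range P ⊆ Set.range Q := by
  rintro _ ⟨i, rfl⟩
  obtain ⟨j, -, hQP⟩ := (infPrime_iff_infIrred.2 (hP i)).finset_inf_le.1
    (heq ▸ Finset.inf_le (mem_univ i))
  obtain ⟨i', -, hPQ⟩ := (infPrime_iff_infIrred.2 (hQ j)).finset_inf_le.1
    (heq ▸ Finset.inf_le (mem_univ j))
  obtain rfl : i' = i := by_contra fun hne ↦ hPirr i' i hne (hPQ.trans hQP)
  exact ⟨j, le_antisymm hQP hPQ⟩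

theorem range_eq_and_card_eq_of_inf_eq_of_infIrred {P : ι → α} {Q : κ → α}
    (hP : ∀ i, InfIrred (P i)) (hQ : ∀ j, InfIrred (Q j))
    (hPirr : ∀ i i', i ≠ i' → ¬ P i ≤ P i') (hQirr : ∀ j j', j ≠ j' → ¬ Q j ≤ Q j')
    (heq : univ.inf P = univ.inf Q) :
    Set.range P = Set.range Q ∧ Nat.card ι = Nat.card κ := by
  have hrange : Set.range P = Set.range Q :=
    (range_subset_of_inf_eq_of_infIrred hP hQ hPirr heq).antisymm
      (range_subset_of_inf_eq_of_infIrred hQ hP hQirr heq.symm)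
  have hPinj : Function.Injective P := fun i i' h ↦ by_contra fun hne ↦ hPirr i i' hne h.le
  have hQinj : Function.Injective Q := fun j j' h ↦ by_contra fun hne ↦ hQirr j j' hne h.le
  refine ⟨hrange, ?_⟩
  rw [← Nat.card_range_of_injective hPinj, ← Nat.card_range_of_injective hQinj, hrange]

end DistribLattice

section IdealSets

variable {d : ℕ} (M : Fin d → AddSubgroup ℝ)

theorem isIdealSet_sset : IsIdealSet M (Sset M) :=
  ⟨subset_rfl, fun _ hs _ hu i ↦ ⟨add_mem (hs i).1 (hu i).1, add_nonneg (hs i).2 (hu i).2⟩⟩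

def idealSets : Sublattice (Set (Fin d → ℝ)) where
  carrier := {I | IsIdealSet M I}
  supClosed' I hI J hJ := ⟨Set.union_subset hI.1 hJ.1, by
    rintro s (hs | hs) u hu
    exacts [Or.inl (hI.2 s hs u hu), Or.inr (hJ.2 s hs u hu)]⟩
  infClosed' I hI J hJ :=
    ⟨Set.inter_subset_left.trans hI.1, fun s hs u hu ↦ ⟨hI.2 s hs.1 u hu, hJ.2 s hs.2 u hu⟩⟩

instance : OrderTop (idealSets M) where
  top := ⟨Sset M, isIdealSet_sset M⟩
  le_top I := I.2.1

variable {M}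

theorem coe_finset_inf_idealSets {ι : Type*} (s : Finset ι) (f : ι → idealSets M) :
    ((s.inf f : idealSets M) : Set (Fin d → ℝ)) = Sset M ∩ ⋂ i ∈ s, (f i : Set (Fin d → ℝ)) := by
  classical
  induction s using Finset.induction_on with
  | empty => simp only [inf_empty, notMem_empty, Set.iInter_of_empty, Set.iInter_univ,
      Set.inter_univ]; rfl
  | insert a s _ ih =>
    rw [inf_insert, Sublattice.coe_inf, ih, set_biInter_insert]
    exact Set.inter_left_comm _ _ _

theorem infIrred_of_mIrred {I : idealSets M} (hI : MIrred M I) : InfIrred I := by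
  refine ⟨fun hmax ↦ hI.2.1 ?_, fun J K hJK ↦ ?_⟩
  · exact congrArg Subtype.val hmax.eq_top
  · have := hI.2.2 J K J.2 K.2 (congrArg Subtype.val hJK).symm
    simpa only [eq_comm, Subtype.ext_iff] using this

end IdealSets

theorem stmt6_general (d m n : ℕ) (M : Fin d → AddSubgroup ℝ)
    (P : Fin m → Set (Fin d → ℝ)) (Q : Fin n → Set (Fin d → ℝ))
    (hP : ∀ i, MIrred M (P i)) (hQ : ∀ j, MIrred M (Q j))
    (hPirr : ∀ i i', i ≠ i' → ¬ P i ⊆ P i')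
    (hQirr : ∀ j j', j ≠ j' → ¬ Q j ⊆ Q j')
    (heq : (⋂ i, P i) = ⋂ j, Q j) :
    Set.range P = Set.range Q ∧ m = n := by
  let P' : Fin m → idealSets M := fun i ↦ ⟨P i, (hP i).1⟩
  let Q' : Fin n → idealSets M := fun j ↦ ⟨Q j, (hQ j).1⟩
  have hinf : univ.inf P' = univ.inf Q' := by
    apply Subtype.ext
    simpa only [coe_finset_inf_idealSets, mem_univ, Set.iInter_true] using
      congrArg (Sset M ∩ ·) heq
  obtain ⟨hrange, hcard⟩ := range_eq_and_card_eq_of_inf_eq_of_infIrred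
    (fun i ↦ infIrred_of_mIrred (hP i)) (fun j ↦ infIrred_of_mIrred (hQ j)) hPirr hQirr hinf
  refine ⟨?_, by simpa using hcard⟩
  rw [show Set.range P = Subtype.val '' Set.range P' from Set.range_comp Subtype.val P',
    show Set.range Q = Subtype.val '' Set.range Q' from Set.range_comp Subtype.val Q', hrange]

/-- uniqueness of irredundant finite m-irreducible decompositions. -/
theorem stmt6 (d m n : ℕ) (M : Fin d → AddSubgroup ℝ) (hM : ∀ i, M i ≠ ⊥)
    (P : Fin m → Set (Fin d → ℝ)) (Q : Fin n → Set (Fin d → ℝ))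
    (hP : ∀ i, MIrred M (P i)) (hQ : ∀ j, MIrred M (Q j))
    (hPirr : ∀ i i', i ≠ i' → ¬ P i ⊆ P i')
    (hQirr : ∀ j j', j ≠ j' → ¬ Q j ⊆ Q j')
    (heq : (⋂ i, P i) = ⋂ j, Q j) :
    Set.range P = Set.range Q ∧ m = n :=
  stmt6_general d m n M P Q hP hQ hPirr hQirr heq
end

section
/- Let S = M^1_{\geq 0} \times \cdots \times M^d_{\geq 0}. For every ideal set I of S and every m-irreducible ideal set J containing I, there exists an ideal set J' containing I, minimal among m-irreducible ideal sets containing I, with J' \subseteq J. Moreover, the intersection of any chain (under inclusion) of m-irreducible ideal sets containing I is again an m-irreducible ideal set containing I. -/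
/-!
Since ideal sets are closed under unions, writing `c = (c ∪ A) ∩ (c ∪ B)` shows that an
m-irreducible ideal set `c` containing `A ∩ B` contains `A` or `B`. If `⋂₀ C = A ∩ B` for a
chain `C` while `A ⊄ c₁` and `B ⊄ c₂` with `c₁, c₂ ∈ C`, the smaller of `c₁, c₂` contains neither
`A` nor `B`, a contradiction. So chains of m-irreducible ideal sets have m-irreducible
intersections, and Zorn's lemma gives the minimal ones.
-/

section InterIrreducible

variable {α : Type*}

/-- The third clause of `MIrred M I` is `IsInterIrreducible (IsIdealSet M) I`. -/
def IsInterIrreducible (p : Set α → Prop) (s : Set α) : Prop :=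
  ∀ A B, p A → p B → s = A ∩ B → s = A ∨ s = B

variable {p : Set α → Prop}

theorem IsInterIrreducible.subset_or_subset
    (hp : ∀ A B, p A → p B → p (A ∪ B)) {c A B : Set α} (hc : p c)
    (hirr : IsInterIrreducible p c) (hA : p A) (hB : p B) (hAB : A ∩ B ⊆ c) :
    A ⊆ c ∨ B ⊆ c := by
  have hc_eq : c = (c ∪ A) ∩ (c ∪ B) := by
    rw [← Set.union_inter_distrib_left, Set.union_eq_self_of_subset_right hAB]
  rcases hirr _ _ (hp _ _ hc hA) (hp _ _ hc hB) hc_eq with h | h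
  · exact Or.inl (Set.union_eq_left.mp h.symm)
  · exact Or.inr (Set.union_eq_left.mp h.symm)

theorem isInterIrreducible_sInter_of_isChain
    (hp : ∀ A B, p A → p B → p (A ∪ B)) {C : Set (Set α)} (hchain : IsChain (· ⊆ ·) C)
    (hC : ∀ c ∈ C, p c ∧ IsInterIrreducible p c) : IsInterIrreducible p (⋂₀ C) := by
  intro A B hA hB hAB
  have hsplit : ∀ c ∈ C, A ⊆ c ∨ B ⊆ c := fun c hc =>
    (hC c hc).2.subset_or_subset hp (hC c hc).1 hA hB (hAB ▸ Set.sInter_subset_of_mem hc)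
  have hsub : A ⊆ ⋂₀ C ∨ B ⊆ ⋂₀ C := by
    by_contra! h
    obtain ⟨⟨c₁, hc₁, hA₁⟩, ⟨c₂, hc₂, hB₂⟩⟩ :
        (∃ c ∈ C, ¬A ⊆ c) ∧ ∃ c ∈ C, ¬B ⊆ c := by
      simpa only [Set.subset_sInter_iff, not_forall, exists_prop] using h
    rcases hchain.total hc₁ hc₂ with h₁₂ | h₂₁
    · exact (hsplit c₁ hc₁).elim hA₁ fun hB₁ => hB₂ (hB₁.trans h₁₂)
    · exact (hsplit c₂ hc₂).elim (fun hA₂ => hA₁ (hA₂.trans h₂₁)) hB₂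
  rcases hsub with h | h
  · exact Or.inl (subset_antisymm (hAB.le.trans Set.inter_subset_left) h)
  · exact Or.inr (subset_antisymm (hAB.le.trans Set.inter_subset_right) h)

end InterIrreducible

section IdealSet

variable {d : ℕ} {M : Fin d → AddSubgroup ℝ}

theorem IsIdealSet.union {J K : Set (Fin d → ℝ)} (hJ : IsIdealSet M J) (hK : IsIdealSet M K) :
    IsIdealSet M (J ∪ K) :=
  ⟨Set.union_subset hJ.1 hK.1, fun s hs u hu =>
    hs.elim (fun h => Or.inl (hJ.2 s h u hu)) (fun h => Or.inr (hK.2 s h u hu))⟩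

theorem IsIdealSet.sInter {C : Set (Set (Fin d → ℝ))} (hne : C.Nonempty)
    (hC : ∀ c ∈ C, IsIdealSet M c) : IsIdealSet M (⋂₀ C) :=
  let ⟨c₀, hc₀⟩ := hne
  ⟨fun _ hx => (hC c₀ hc₀).1 (hx c₀ hc₀), fun s hs u hu c hc => (hC c hc).2 s (hs c hc) u hu⟩

theorem MIrred.sInter_of_isChain {C : Set (Set (Fin d → ℝ))} (hne : C.Nonempty)
    (hchain : IsChain (· ⊆ ·) C) (hC : ∀ c ∈ C, MIrred M c) : MIrred M (⋂₀ C) := by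
  obtain ⟨c₀, hc₀⟩ := hne
  refine ⟨IsIdealSet.sInter ⟨c₀, hc₀⟩ fun c hc => (hC c hc).1, fun h => ?_,
    isInterIrreducible_sInter_of_isChain (fun _ _ => IsIdealSet.union) hchain
      fun c hc => ⟨(hC c hc).1, (hC c hc).2.2⟩⟩
  exact (hC c₀ hc₀).2.1 (subset_antisymm (hC c₀ hc₀).1.1 (h ▸ Set.sInter_subset_of_mem hc₀))

theorem exists_minimal_mIrred_between {I J : Set (Fin d → ℝ)} (hJ : MIrred M J) (hIJ : I ⊆ J) :
    ∃ J', MIrred M J' ∧ I ⊆ J' ∧ J' ⊆ J ∧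
      ∀ K, MIrred M K → I ⊆ K → K ⊆ J' → K = J' := by
  obtain ⟨J', hJ'J, ⟨hJ', hIJ', -⟩, hmin⟩ :=
    zorn_superset_nonempty {K | MIrred M K ∧ I ⊆ K ∧ K ⊆ J}
      (fun C hCsub hchain hne =>
        ⟨⋂₀ C,
          ⟨MIrred.sInter_of_isChain hne hchain fun c hc => (hCsub hc).1,
            Set.subset_sInter fun c hc => (hCsub hc).2.1,
            let ⟨c, hc⟩ := hne; (Set.sInter_subset_of_mem hc).trans (hCsub hc).2.2⟩,
          fun _ => Set.sInter_subset_of_mem⟩)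
      J ⟨hJ, hIJ, subset_rfl⟩
  exact ⟨J', hJ', hIJ', hJ'J, fun K hK hIK hKJ' =>
    subset_antisymm hKJ' (hmin ⟨hK, hIK, hKJ'.trans hJ'J⟩ hKJ')⟩

end IdealSet

theorem stmt8_general (d : ℕ) (M : Fin d → AddSubgroup ℝ)
    (I : Set (Fin d → ℝ))
    (J : Set (Fin d → ℝ)) (hJ : MIrred M J) (hIJ : I ⊆ J) :
    (∃ J', MIrred M J' ∧ I ⊆ J' ∧ J' ⊆ J ∧
      ∀ K, MIrred M K → I ⊆ K → K ⊆ J' → K = J') ∧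
    (∀ C : Set (Set (Fin d → ℝ)), C.Nonempty → IsChain (· ⊆ ·) C →
      (∀ c ∈ C, MIrred M c ∧ I ⊆ c) → MIrred M (⋂₀ C) ∧ I ⊆ ⋂₀ C) :=
  ⟨exists_minimal_mIrred_between hJ hIJ, fun _ hne hchain hC =>
    ⟨MIrred.sInter_of_isChain hne hchain fun c hc => (hC c hc).1,
      Set.subset_sInter fun c hc => (hC c hc).2⟩⟩

/-- existence of minimal m-irreducible ideal sets below a given one
(Proposition 4.14(a)), and the chain-intersection lemma. -/
theorem stmt8 (d : ℕ) (M : Fin d → AddSubgroup ℝ) (hM : ∀ i, M i ≠ ⊥)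
    (I : Set (Fin d → ℝ)) (hI : IsIdealSet M I)
    (J : Set (Fin d → ℝ)) (hJ : MIrred M J) (hIJ : I ⊆ J) :
    (∃ J', MIrred M J' ∧ I ⊆ J' ∧ J' ⊆ J ∧
      ∀ K, MIrred M K → I ⊆ K → K ⊆ J' → K = J') ∧
    (∀ C : Set (Set (Fin d → ℝ)), C.Nonempty → IsChain (· ⊆ ·) C →
      (∀ c ∈ C, MIrred M c ∧ I ⊆ c) → MIrred M (⋂₀ C) ∧ I ⊆ ⋂₀ C) :=
  stmt8_general d M I J hJ hIJ
end

section
/- Let S = M^1_{\geq 0} \times \cdots \times M^d_{\geq 0} and let I be an ideal set with a finite decomposition I = \bigcap_{i=1}^t J_i into m-irreducible ideal sets, with t \geq 1. Then m-dim(S/I) = max_{1 \leq i \leq t} m-dim(S/J_i). -/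
/-! Every `Q_T` is m-prime, also for finite sums: if `∑ₖ fₖ ∈ Q_T` with all `fₖ ∈ S`, some
`fₖ ∈ Q_T`. Hence if `Q_T ⊇ ⋂ᵢ Jᵢ` but `fₖ ∈ Jₖ \ Q_T` for every `k`, the sum `∑ₖ fₖ` lies in
every `Jᵢ`, hence in `Q_T`, a contradiction; so `Q_T ⊇ Jₖ` for some `k`. Together with the
antitonicity of `mdim` this gives both inequalities. -/

section

variable {d : ℕ} {M : Fin d → AddSubgroup ℝ}

lemma add_mem_Sset {a b : Fin d → ℝ} (ha : a ∈ Sset M) (hb : b ∈ Sset M) : a + b ∈ Sset M :=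
  fun i => ⟨(M i).add_mem (ha i).1 (hb i).1, add_nonneg (ha i).2 (hb i).2⟩

lemma sum_mem_Sset {ι : Type*} {s : Finset ι} {f : ι → Fin d → ℝ}
    (hf : ∀ k ∈ s, f k ∈ Sset M) : ∑ k ∈ s, f k ∈ Sset M :=
  Finset.sum_induction f (· ∈ Sset M) (fun _ _ => add_mem_Sset)
    (fun i => ⟨(M i).zero_mem, le_rfl⟩) hf

lemma exists_mem_QT_of_sum_mem_QT {ι : Type*} {s : Finset ι} {f : ι → Fin d → ℝ}
    {T : Finset (Fin d)} (hf : ∀ k ∈ s, f k ∈ Sset M) (hsum : ∑ k ∈ s, f k ∈ QT M T) :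
    ∃ k ∈ s, f k ∈ QT M T := by
  obtain ⟨-, i, hiT, hpos⟩ := hsum
  rw [Finset.sum_apply, ← Finset.sum_const_zero (s := s)] at hpos
  obtain ⟨k, hks, hk⟩ := Finset.exists_lt_of_sum_lt hpos
  exact ⟨k, hks, hf k hks, i, hiT, hk⟩

lemma exists_subset_QT_of_iInter_subset {ι : Type*} [Finite ι] {J : ι → Set (Fin d → ℝ)}
    (hJ : ∀ i, IsIdealSet M (J i)) {T : Finset (Fin d)} (hsub : ⋂ i, J i ⊆ QT M T) :
    ∃ k, J k ⊆ QT M T := by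
  classical
  have := Fintype.ofFinite ι
  by_contra! h
  choose f hfJ hfQ using fun k => Set.not_subset.mp (h k)
  have hfS : ∀ k ∈ Finset.univ, f k ∈ Sset M := fun k _ => (hJ k).1 (hfJ k)
  have hsum : ∑ k, f k ∈ ⋂ i, J i := by
    refine Set.mem_iInter.mpr fun j => ?_
    rw [← Finset.add_sum_erase _ _ (Finset.mem_univ j)]
    exact (hJ j).2 _ (hfJ j) _ (sum_mem_Sset fun k hk => hfS k (Finset.mem_of_mem_erase hk))
  obtain ⟨k, -, hk⟩ := exists_mem_QT_of_sum_mem_QT hfS (hsub hsum)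
  exact hfQ k hk

lemma le_mdim {I : Set (Fin d → ℝ)} {T : Finset (Fin d)} (hT : I ⊆ QT M T) :
    d - T.card ≤ mdim M I :=
  le_csSup ⟨d, by rintro _ ⟨T', -, rfl⟩; exact Nat.sub_le _ _⟩ ⟨T, hT, rfl⟩

lemma mdim_le {I : Set (Fin d → ℝ)} {n : ℕ} (h : ∀ T, I ⊆ QT M T → d - T.card ≤ n) :
    mdim M I ≤ n :=
  csSup_le' <| by rintro _ ⟨T, hT, rfl⟩; exact h T hT

lemma mdim_le_dim (I : Set (Fin d → ℝ)) : mdim M I ≤ d :=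
  mdim_le fun _ _ => Nat.sub_le _ _

lemma mdim_anti {I J : Set (Fin d → ℝ)} (h : I ⊆ J) : mdim M J ≤ mdim M I :=
  mdim_le fun _ hT => le_mdim (h.trans hT)

end

theorem stmt12_general (d t : ℕ) (M : Fin d → AddSubgroup ℝ)
    (J : Fin t → Set (Fin d → ℝ)) (hJ : ∀ i, MIrred M (J i)) :
    mdim M (⋂ i, J i) = sSup {n : ℕ | ∃ i, n = mdim M (J i)} := by
  have hbdd : BddAbove {n : ℕ | ∃ i, n = mdim M (J i)} :=
    ⟨d, by rintro _ ⟨i, rfl⟩; exact mdim_le_dim _⟩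
  refine le_antisymm (mdim_le fun T hT => ?_) (csSup_le' ?_)
  · obtain ⟨k, hk⟩ := exists_subset_QT_of_iInter_subset (fun i => (hJ i).1) hT
    exact (le_mdim hk).trans (le_csSup hbdd ⟨k, rfl⟩)
  · rintro _ ⟨i, rfl⟩
    exact mdim_anti (Set.iInter_subset J i)

/-- for a finite m-irreducible decomposition `I = ⋂ᵢ Jᵢ` (t ≥ 1),
`mdim (S/I) = maxᵢ mdim (S/Jᵢ)`. -/
theorem stmt12 (d t : ℕ) (ht : 0 < t) (M : Fin d → AddSubgroup ℝ) (hM : ∀ i, M i ≠ ⊥)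
    (J : Fin t → Set (Fin d → ℝ)) (hJ : ∀ i, MIrred M (J i)) :
    mdim M (⋂ i, J i) = sSup {n : ℕ | ∃ i, n = mdim M (J i)} :=
  stmt12_general d t M J hJ
end

section
/- Define, for nonempty ideal sets I, J of S = M^1_{\geq 0} \times \cdots \times M^d_{\geq 0} \subseteq \mathbb{R}^d, dist(I,J) = inf { \varepsilon > 0 : (\forall \gamma \in I \exists \delta \in J, |\gamma - \delta| < \varepsilon) and (\forall \delta \in J \exists \gamma \in I, |\gamma - \delta| < \varepsilon) } (Euclidean norm). Then dist is a metric on the set of nonempty finitely generated ideal sets of S: it is real-valued and nonnegative, symmetric, satisfies the triangle inequality, and dist(I,J) = 0 implies I = J. -/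
/-!
`idealDist` is the Hausdorff distance between subsets of `ℝ^d`, which is a pseudometric
wherever it is finite. Finiteness: for `j ∈ J` the translate `j + I` lies in `J` and every point
of `I` is moved by exactly `‖j‖`. Definiteness needs finite generation: if `γ ∈ S` is
approximated arbitrarily well by `Up H` with `H` finite, then it is approximated arbitrarily
well by a single translate `h + S`; as `S` lies in the nonnegative orthant this forces
`h ≤ γ` coordinatewise, and then `γ - h ∈ S`, so `γ ∈ Up H`.
-/

open Filter Topology

variable {d : ℕ}

theorem myDist_eq_dist (γ δ : Fin d → ℝ) :
    myDist γ δ = dist (WithLp.toLp 2 γ : EuclideanSpace ℝ (Fin d)) (WithLp.toLp 2 δ) := by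
  rw [EuclideanSpace.dist_eq, myDist]
  congr 1
  refine Finset.sum_congr rfl fun i _ => ?_
  rw [Real.dist_eq, sq_abs]

theorem myDist_self (γ : Fin d → ℝ) : myDist γ γ = 0 := by
  rw [myDist_eq_dist, dist_self]

theorem myDist_comm (γ δ : Fin d → ℝ) : myDist γ δ = myDist δ γ := by
  rw [myDist_eq_dist, myDist_eq_dist, dist_comm]

theorem myDist_triangle (γ δ κ : Fin d → ℝ) : myDist γ κ ≤ myDist γ δ + myDist δ κ := by
  simp only [myDist_eq_dist]
  exact dist_triangle _ _ _

theorem abs_sub_le_myDist (γ δ : Fin d → ℝ) (i : Fin d) : |γ i - δ i| ≤ myDist γ δ := by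
  rw [myDist_eq_dist, ← Real.dist_eq]
  exact PiLp.dist_apply_le (WithLp.toLp 2 γ : EuclideanSpace ℝ (Fin d)) _ i

theorem myDist_add_self_right (γ δ : Fin d → ℝ) :
    myDist γ (δ + γ) = ‖(WithLp.toLp 2 δ : EuclideanSpace ℝ (Fin d))‖ := by
  rw [myDist_eq_dist, WithLp.toLp_add, dist_add_self_right]

section DistLT

variable {ε ε' : ℝ} {I J K : Set (Fin d → ℝ)}

theorem DistLT.symm (h : DistLT ε I J) : DistLT ε J I :=
  ⟨fun δ hδ => (h.2 δ hδ).imp fun _ ⟨hγ, hd⟩ => ⟨hγ, by rwa [myDist_comm]⟩,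
    fun γ hγ => (h.1 γ hγ).imp fun _ ⟨hδ, hd⟩ => ⟨hδ, by rwa [myDist_comm]⟩⟩

theorem distLT_comm : DistLT ε I J ↔ DistLT ε J I :=
  ⟨DistLT.symm, DistLT.symm⟩

theorem DistLT.mono (h : DistLT ε I J) (hle : ε ≤ ε') : DistLT ε' I J :=
  ⟨fun γ hγ => (h.1 γ hγ).imp fun _ ⟨hδ, hd⟩ => ⟨hδ, hd.trans_le hle⟩,
    fun δ hδ => (h.2 δ hδ).imp fun _ ⟨hγ, hd⟩ => ⟨hγ, hd.trans_le hle⟩⟩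

theorem DistLT.trans (h₁ : DistLT ε I J) (h₂ : DistLT ε' J K) : DistLT (ε + ε') I K := by
  refine ⟨fun γ hγ => ?_, fun κ hκ => ?_⟩
  · obtain ⟨δ, hδ, hγδ⟩ := h₁.1 γ hγ
    obtain ⟨κ, hκ, hδκ⟩ := h₂.1 δ hδ
    exact ⟨κ, hκ, (myDist_triangle γ δ κ).trans_lt (add_lt_add hγδ hδκ)⟩
  · obtain ⟨δ, hδ, hδκ⟩ := h₂.2 κ hκ
    obtain ⟨γ, hγ, hγδ⟩ := h₁.2 δ hδ
    exact ⟨γ, hγ, (myDist_triangle γ δ κ).trans_lt (add_lt_add hγδ hδκ)⟩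

theorem distLT_self (hε : 0 < ε) : DistLT ε I I :=
  ⟨fun γ hγ => ⟨γ, hγ, by rwa [myDist_self]⟩, fun γ hγ => ⟨γ, hγ, by rwa [myDist_self]⟩⟩

end DistLT

theorem IsIdealSet.setOf_distLT_nonempty {M : Fin d → AddSubgroup ℝ} {I J : Set (Fin d → ℝ)}
    (hI : IsIdealSet M I) (hJ : IsIdealSet M J) (hIne : I.Nonempty) (hJne : J.Nonempty) :
    {ε : ℝ | 0 < ε ∧ DistLT ε I J}.Nonempty := by
  obtain ⟨i, hi⟩ := hIne
  obtain ⟨j, hj⟩ := hJne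
  refine ⟨‖(WithLp.toLp 2 i : EuclideanSpace ℝ (Fin d))‖ +
      ‖(WithLp.toLp 2 j : EuclideanSpace ℝ (Fin d))‖ + 1, by positivity, ?_, ?_⟩
  · refine fun γ hγ => ⟨j + γ, hJ.2 j hj γ (hI.1 hγ), ?_⟩
    rw [myDist_add_self_right]
    linarith [norm_nonneg (WithLp.toLp 2 i : EuclideanSpace ℝ (Fin d))]
  · refine fun δ hδ => ⟨i + δ, hI.2 i hi δ (hJ.1 hδ), ?_⟩
    rw [myDist_comm, myDist_add_self_right]
    linarith [norm_nonneg (WithLp.toLp 2 j : EuclideanSpace ℝ (Fin d))]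

section idealDist

variable {I J K : Set (Fin d → ℝ)}

theorem idealDist_nonneg (I J : Set (Fin d → ℝ)) : 0 ≤ idealDist I J :=
  Real.sInf_nonneg fun _ h => h.1.le

theorem idealDist_self (I : Set (Fin d → ℝ)) : idealDist I I = 0 := by
  have h : {ε : ℝ | 0 < ε ∧ DistLT ε I I} = Set.Ioi 0 :=
    Set.ext fun _ => ⟨And.left, fun hε => ⟨hε, distLT_self hε⟩⟩
  rw [idealDist, h, csInf_Ioi]

theorem idealDist_comm (I J : Set (Fin d → ℝ)) : idealDist I J = idealDist J I := by
  simp only [idealDist, distLT_comm (I := I)]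

theorem idealDist_triangle (hIJ : {ε : ℝ | 0 < ε ∧ DistLT ε I J}.Nonempty)
    (hJK : {ε : ℝ | 0 < ε ∧ DistLT ε J K}.Nonempty) :
    idealDist I K ≤ idealDist I J + idealDist J K := by
  have bdd : ∀ A B : Set (Fin d → ℝ), BddBelow {ε : ℝ | 0 < ε ∧ DistLT ε A B} :=
    fun _ _ => ⟨0, fun _ h => h.1.le⟩
  rw [idealDist, idealDist, idealDist, ← csInf_add hIJ (bdd I J) hJK (bdd J K)]
  refine csInf_le_csInf (bdd I K) (hIJ.add hJK) ?_
  rintro _ ⟨ε, ⟨hε, h₁⟩, ε', ⟨hε', h₂⟩, rfl⟩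
  exact ⟨add_pos hε hε', h₁.trans h₂⟩

theorem distLT_of_idealDist_lt {ε : ℝ} (hIJ : {ε : ℝ | 0 < ε ∧ DistLT ε I J}.Nonempty)
    (hε : idealDist I J < ε) : DistLT ε I J := by
  obtain ⟨ε', ⟨-, h⟩, hε'⟩ := exists_lt_of_csInf_lt hIJ hε
  exact h.mono hε'.le

end idealDist

theorem Finset.exists_mem_forall_pos_of_forall_pos_exists_mem {α : Type*} {H : Finset α}
    {P : α → ℝ → Prop} (hP : ∀ a, Monotone (P a)) (h : ∀ ε > 0, ∃ a ∈ H, P a ε) :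
    ∃ a ∈ H, ∀ ε > 0, P a ε := by
  by_contra! hne
  have hsmall : ∀ᶠ ε in 𝓝[>] (0 : ℝ), ∀ a ∈ H, ¬ P a ε := by
    rw [eventually_all_finset]
    intro a ha
    obtain ⟨ε, hε, hPa⟩ := hne a ha
    filter_upwards [Ioo_mem_nhdsGT hε] with ε' hε' using fun hP' => hPa (hP a hε'.2.le hP')
  obtain ⟨ε, hnot, hε⟩ := (hsmall.and self_mem_nhdsWithin).exists
  obtain ⟨a, ha, hPa⟩ := h ε hε
  exact hnot a ha hPa

theorem le_of_forall_exists_myDist_add_lt {h γ : Fin d → ℝ}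
    (hclose : ∀ ε > 0, ∃ u, 0 ≤ u ∧ myDist γ (h + u) < ε) : h ≤ γ := by
  intro i
  refine le_of_forall_pos_lt_add fun ε hε => ?_
  obtain ⟨u, hu, hd⟩ := hclose ε hε
  have hi := (neg_le_abs (γ i - (h + u) i)).trans (abs_sub_le_myDist γ (h + u) i)
  simp only [Pi.add_apply] at hi
  linarith [show 0 ≤ u i from hu i]

theorem mem_up_of_le {M : Fin d → AddSubgroup ℝ} {H : Set (Fin d → ℝ)} {h γ : Fin d → ℝ}
    (hh : h ∈ H) (hhS : h ∈ Sset M) (hγ : γ ∈ Sset M) (hle : h ≤ γ) : γ ∈ Up M H :=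
  ⟨h, hh, γ - h, fun i => ⟨sub_mem (hγ i).1 (hhS i).1, sub_nonneg.2 (hle i)⟩,
    (add_sub_cancel h γ).symm⟩

theorem mem_up_of_forall_myDist_lt {M : Fin d → AddSubgroup ℝ} {H : Finset (Fin d → ℝ)}
    {γ : Fin d → ℝ} (hH : ↑H ⊆ Sset M) (hγ : γ ∈ Sset M)
    (happrox : ∀ ε > 0, ∃ δ ∈ Up M ↑H, myDist γ δ < ε) : γ ∈ Up M ↑H := by
  obtain ⟨h, hh, hclose⟩ : ∃ h ∈ H, ∀ ε > 0, ∃ u ∈ Sset M, myDist γ (h + u) < ε := by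
    refine Finset.exists_mem_forall_pos_of_forall_pos_exists_mem
      (fun h _ _ hle ⟨u, hu, hd⟩ => ⟨u, hu, hd.trans_le hle⟩) fun ε hε => ?_
    obtain ⟨_, ⟨h, hh, u, hu, rfl⟩, hd⟩ := happrox ε hε
    exact ⟨h, hh, u, hu, hd⟩
  refine mem_up_of_le hh (hH hh) hγ (le_of_forall_exists_myDist_add_lt fun ε hε => ?_)
  obtain ⟨u, hu, hd⟩ := hclose ε hε
  exact ⟨u, fun i => (hu i).2, hd⟩

theorem IsFG.subset_of_forall_myDist_lt {M : Fin d → AddSubgroup ℝ} {I J : Set (Fin d → ℝ)}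
    (hJ : IsFG M J) (hI : I ⊆ Sset M) (happrox : ∀ ε > 0, ∀ γ ∈ I, ∃ δ ∈ J, myDist γ δ < ε) :
    I ⊆ J := by
  obtain ⟨H, hH, rfl⟩ := hJ
  exact fun γ hγ => mem_up_of_forall_myDist_lt hH (hI hγ) fun ε hε => happrox ε hε γ hγ

theorem eq_of_idealDist_eq_zero {M : Fin d → AddSubgroup ℝ} {I J : Set (Fin d → ℝ)}
    (hI : I ⊆ Sset M) (hJ : J ⊆ Sset M) (hIfg : IsFG M I) (hJfg : IsFG M J)
    (hIJ : {ε : ℝ | 0 < ε ∧ DistLT ε I J}.Nonempty) (h0 : idealDist I J = 0) : I = J := by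
  have hDist : ∀ ε > 0, DistLT ε I J := fun ε hε => distLT_of_idealDist_lt hIJ (h0 ▸ hε)
  exact (hJfg.subset_of_forall_myDist_lt hI fun ε hε => (hDist ε hε).1).antisymm
    (hIfg.subset_of_forall_myDist_lt hJ fun ε hε => (hDist ε hε).symm.1)

theorem stmt14_general (d : ℕ) (M : Fin d → AddSubgroup ℝ)
    (I J K : Set (Fin d → ℝ))
    (hI : IsIdealSet M I) (hJ : IsIdealSet M J) (hK : IsIdealSet M K)
    (hIfg : IsFG M I) (hJfg : IsFG M J)
    (hIne : I.Nonempty) (hJne : J.Nonempty) (hKne : K.Nonempty) :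
    {ε : ℝ | 0 < ε ∧ DistLT ε I J}.Nonempty ∧
    0 ≤ idealDist I J ∧
    idealDist I I = 0 ∧
    idealDist I J = idealDist J I ∧
    idealDist I K ≤ idealDist I J + idealDist J K ∧
    (idealDist I J = 0 → I = J) := by
  have hIJ := hI.setOf_distLT_nonempty hJ hIne hJne
  exact ⟨hIJ, idealDist_nonneg I J, idealDist_self I, idealDist_comm I J,
    idealDist_triangle hIJ (hJ.setOf_distLT_nonempty hK hJne hKne),
    eq_of_idealDist_eq_zero hI.1 hJ.1 hIfg hJfg hIJ⟩

/-- `idealDist` is a metric on nonempty finitely generated ideal sets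
(Theorem tmetric). -/
theorem stmt14 (d : ℕ) (M : Fin d → AddSubgroup ℝ) (hM : ∀ i, M i ≠ ⊥)
    (I J K : Set (Fin d → ℝ))
    (hI : IsIdealSet M I) (hJ : IsIdealSet M J) (hK : IsIdealSet M K)
    (hIfg : IsFG M I) (hJfg : IsFG M J) (hKfg : IsFG M K)
    (hIne : I.Nonempty) (hJne : J.Nonempty) (hKne : K.Nonempty) :
    {ε : ℝ | 0 < ε ∧ DistLT ε I J}.Nonempty ∧
    0 ≤ idealDist I J ∧
    idealDist I I = 0 ∧
    idealDist I J = idealDist J I ∧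
    idealDist I K ≤ idealDist I J + idealDist J K ∧
    (idealDist I J = 0 → I = J) :=
  stmt14_general d M I J K hI hJ hK hIfg hJfg hIne hJne hKne
end

section
/- Let I = Up({\alpha}) = { \alpha + u : u \in S } and J = Up({\beta_1, ..., \beta_n}) be ideal sets of S = M^1_{\geq 0} \times \cdots \times M^d_{\geq 0}. For each j let \beta'_j be the componentwise maximum of \beta_j and \alpha. Then inf { |\alpha - \gamma| : \gamma \in J } = min { |\alpha - \beta'_j| : 1 \leq j \leq n }, where |\cdot| is the Euclidean norm on \mathbb{R}^d. -/
/-!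
The point `β ⊔ α` is the nearest point to `α` of the orthant `β + ℝ≥0^d`, coordinatewise:
`|a - max b a| ≤ |a - c|` whenever `b ≤ c`. Every element of `Up M (range β)` lies in one of
the orthants `β j + ℝ≥0^d`, and `β j ⊔ α` itself lies in `Up M (range β)` because
`β j ⊔ α - β j = (α - β j) ⊔ 0` has coordinates in the groups `M i`.
-/

lemma sq_sub_max_le_sq_sub {a b c : ℝ} (hbc : b ≤ c) : (a - max b a) ^ 2 ≤ (a - c) ^ 2 := by
  rcases le_total b a with hba | hab
  · simp [max_eq_right hba, sq_nonneg]
  · rw [max_eq_left hab]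
    nlinarith

lemma myDist_sup_le_of_le {d : ℕ} {α β γ : Fin d → ℝ} (hβγ : β ≤ γ) :
    myDist α (β ⊔ α) ≤ myDist α γ :=
  Real.sqrt_le_sqrt <| Finset.sum_le_sum fun i _ => sq_sub_max_le_sq_sub (hβγ i)

lemma sup_sub_mem_Sset {d : ℕ} {M : Fin d → AddSubgroup ℝ} {α β : Fin d → ℝ}
    (hα : α ∈ Sset M) (hβ : β ∈ Sset M) : β ⊔ α - β ∈ Sset M := by
  intro i
  refine ⟨?_, sub_nonneg.mpr le_sup_left⟩
  show max (β i) (α i) - β i ∈ M i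
  rcases le_total (α i) (β i) with h | h
  · rw [max_eq_left h, sub_self]
    exact zero_mem _
  · rw [max_eq_right h]
    exact sub_mem (hα i).1 (hβ i).1

lemma sup_mem_Up {d : ℕ} {M : Fin d → AddSubgroup ℝ} {T : Set (Fin d → ℝ)}
    {α β : Fin d → ℝ} (hα : α ∈ Sset M) (hβT : β ∈ T) (hβ : β ∈ Sset M) :
    β ⊔ α ∈ Up M T :=
  ⟨β, hβT, β ⊔ α - β, sup_sub_mem_Sset hα hβ, (add_sub_cancel β _).symm⟩

lemma le_of_mem_Up {d : ℕ} {M : Fin d → AddSubgroup ℝ} {T : Set (Fin d → ℝ)}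
    {γ : Fin d → ℝ} (hγ : γ ∈ Up M T) : ∃ t ∈ T, t ≤ γ := by
  obtain ⟨t, ht, u, hu, rfl⟩ := hγ
  exact ⟨t, ht, le_add_of_nonneg_right fun i => (hu i).2⟩

theorem stmt15_general (d n : ℕ) (hn : 0 < n) (M : Fin d → AddSubgroup ℝ)
    (α : Fin d → ℝ) (hα : α ∈ Sset M)
    (β : Fin n → Fin d → ℝ) (hβ : ∀ j, β j ∈ Sset M) :
    sInf {x : ℝ | ∃ γ ∈ Up M (Set.range β), x = myDist α γ} =
      Finset.univ.inf' (Finset.univ_nonempty_iff.mpr ⟨⟨0, hn⟩⟩)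
        (fun j => myDist α (fun i => max (β j i) (α i))) := by
  refine IsLeast.csInf_eq ⟨?_, ?_⟩
  · obtain ⟨j, -, hj⟩ := Finset.exists_mem_eq_inf' (Finset.univ_nonempty_iff.mpr ⟨⟨0, hn⟩⟩)
      fun j => myDist α (β j ⊔ α)
    exact ⟨β j ⊔ α, sup_mem_Up hα ⟨j, rfl⟩ (hβ j), hj⟩
  · rintro x ⟨γ, hγ, rfl⟩
    obtain ⟨_, ⟨j, rfl⟩, hβγ⟩ := le_of_mem_Up hγ
    exact (Finset.inf'_le _ (Finset.mem_univ j)).trans (myDist_sup_le_of_le hβγ)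

/-- for `I = Up({α})` and `J = Up({β₁,…,βₙ})`, with `β'ⱼ` the
componentwise max of `βⱼ` and `α`, one has
`inf {|α - γ| : γ ∈ J} = min_j |α - β'ⱼ|`. -/
theorem stmt15 (d n : ℕ) (hn : 0 < n) (M : Fin d → AddSubgroup ℝ) (hM : ∀ i, M i ≠ ⊥)
    (α : Fin d → ℝ) (hα : α ∈ Sset M)
    (β : Fin n → Fin d → ℝ) (hβ : ∀ j, β j ∈ Sset M) :
    sInf {x : ℝ | ∃ γ ∈ Up M (Set.range β), x = myDist α γ} =
      Finset.univ.inf' (Finset.univ_nonempty_iff.mpr ⟨⟨0, hn⟩⟩)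
        (fun j => myDist α (fun i => max (β j i) (α i))) :=
  stmt15_general d n hn M α hα β hβ
end

section
/- Work in S = \mathbb{R}_{\geq 0}^d. Let \Gamma = (V, E) be a finite simple graph on V = {1,...,d} and for each edge ij \in E let S(ij) \subseteq \mathbb{R}_{>0} be an interval of the form [b, \infty) with b > 0 or (a, \infty) with a \geq 0. Let I = Up({ t e_i + t e_j : ij \in E, t \in S(ij) }). For a pair (W, \sigma) with W \subseteq V and \sigma : W \to \Omega (\Omega the set of such intervals), define Q_{W,\sigma} = Up({ a e_i : i \in W, a \in \sigma(i) }). Then I \subseteq Q_{W,\sigma} if and only if (W,\sigma) is an interval vertex cover of (\Gamma, S), i.e., W is a vertex cover of \Gamma and for each edge ij \in E, either (i \in W and S(ij) \subseteq \sigma(i)) or (j \in W and S(ij) \subseteq \sigma(j)). -/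
/-- The nonnegative orthant `S = ℝ_{≥0}^d`. -/
def Snn (d : ℕ) : Set (Fin d → ℝ) := {s | ∀ i, 0 ≤ s i}

/-- The up-set of `T` in `ℝ_{≥0}^d`. -/
def UpN (d : ℕ) (T : Set (Fin d → ℝ)) : Set (Fin d → ℝ) :=
  {s | ∃ t ∈ T, ∃ u ∈ Snn d, s = t + u}

/-- `Ω = {(a,∞) : a ≥ 0} ∪ {[b,∞) : b > 0}`. -/
def IsOmega (A : Set ℝ) : Prop :=
  (∃ a : ℝ, 0 ≤ a ∧ A = Set.Ioi a) ∨ (∃ b : ℝ, 0 < b ∧ A = Set.Ici b)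

/-- The ideal set `I = Up({t·eᵢ + t·eⱼ : ij ∈ E, t ∈ S(ij)})` of the weighted graph. -/
def edgeIdealSet (d : ℕ) (G : SimpleGraph (Fin d)) (w : Fin d → Fin d → Set ℝ) :
    Set (Fin d → ℝ) :=
  UpN d {x | ∃ i j t, G.Adj i j ∧ t ∈ w i j ∧ x = Pi.single i t + Pi.single j t}

/-- `Q_{W,σ} = Up({a·eᵢ : i ∈ W, a ∈ σ(i)})`. -/
def QWsigma (d : ℕ) (W : Finset (Fin d)) (σ : Fin d → Set ℝ) : Set (Fin d → ℝ) :=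
  UpN d {x | ∃ i ∈ W, ∃ a ∈ σ i, x = Pi.single i a}

/-- `(W,σ)` is an interval vertex cover of `(Γ, S)`. -/
def IsIVC (d : ℕ) (G : SimpleGraph (Fin d)) (w : Fin d → Fin d → Set ℝ)
    (W : Finset (Fin d)) (σ : Fin d → Set ℝ) : Prop :=
  (∀ i j, G.Adj i j → i ∈ W ∨ j ∈ W) ∧
  (∀ i j, G.Adj i j → (i ∈ W ∧ w i j ⊆ σ i) ∨ (j ∈ W ∧ w i j ⊆ σ j))


lemma omega_pos {A : Set ℝ} (h : IsOmega A) {t : ℝ} (ht : t ∈ A) : 0 < t := by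
  rcases h with ⟨a, ha, rfl⟩ | ⟨b, hb, rfl⟩
  · exact lt_of_le_of_lt ha ht
  · exact lt_of_lt_of_le hb ht

lemma omega_nonempty {A : Set ℝ} (h : IsOmega A) : A.Nonempty := by
  rcases h with ⟨a, _, rfl⟩ | ⟨b, _, rfl⟩
  · exact ⟨a + 1, by simp⟩
  · exact ⟨b, le_refl b⟩

lemma omega_up {A : Set ℝ} (h : IsOmega A) {a t : ℝ} (ha : a ∈ A) (hat : a ≤ t) : t ∈ A := by
  rcases h with ⟨c, _, rfl⟩ | ⟨c, _, rfl⟩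
  · exact lt_of_lt_of_le ha hat
  · exact le_trans ha hat

lemma omega_total {A B : Set ℝ} (hA : IsOmega A) (hB : IsOmega B) : A ⊆ B ∨ B ⊆ A := by
  rcases hA with ⟨a, _, rfl⟩ | ⟨a, _, rfl⟩ <;> rcases hB with ⟨b, _, rfl⟩ | ⟨b, _, rfl⟩
  · rcases le_total a b with h | h
    · right; exact Set.Ioi_subset_Ioi h
    · left; exact Set.Ioi_subset_Ioi h
  · rcases le_or_gt b a with h | h
    · left; intro x hx; exact le_trans h (le_of_lt hx)
    · right; intro x hx; exact lt_of_lt_of_le h hx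
  · rcases le_or_gt a b with h | h
    · right; intro x hx; exact le_trans h (le_of_lt hx)
    · left; intro x hx; exact lt_of_lt_of_le h hx
  · rcases le_total a b with h | h
    · right; intro x hx; exact le_trans h hx
    · left; intro x hx; exact le_trans h hx

/-- `I ⊆ Q_{W,σ}` iff `(W,σ)` is an interval vertex cover
(Lemma 5.14(b)). -/
theorem stmt17 (d : ℕ) (G : SimpleGraph (Fin d)) (w : Fin d → Fin d → Set ℝ)
    (hw : ∀ i j, G.Adj i j → IsOmega (w i j)) (hwsymm : ∀ i j, w i j = w j i)
    (W : Finset (Fin d)) (σ : Fin d → Set ℝ) (hσ : ∀ i ∈ W, IsOmega (σ i)) :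
    edgeIdealSet d G w ⊆ QWsigma d W σ ↔ IsIVC d G w W σ := by
  constructor
  · intro h
    have key : ∀ i j, G.Adj i j → ∀ t ∈ w i j,
        (i ∈ W ∧ t ∈ σ i) ∨ (j ∈ W ∧ t ∈ σ j) := by
      intro i j hij t ht
      have hne : i ≠ j := hij.ne
      have hx : (Pi.single i t + Pi.single j t : Fin d → ℝ) ∈ edgeIdealSet d G w :=
        ⟨_, ⟨i, j, t, hij, ht, rfl⟩, 0, fun k => le_refl 0, (add_zero _).symm⟩
      obtain ⟨x, ⟨k, hk, a, hak, rfl⟩, u, hu, hs⟩ := h hx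
      have ha : 0 < a := omega_pos (hσ k hk) hak
      have hka : ∀ m : Fin d, (Pi.single k a : Fin d → ℝ) m ≤
          (Pi.single i t + Pi.single j t : Fin d → ℝ) m := by
        intro m
        have := hu m
        have : (Pi.single i t + Pi.single j t : Fin d → ℝ) m
            = (Pi.single k a : Fin d → ℝ) m + u m := by rw [hs]; rfl
        linarith [hu m]
      have hkk := hka k
      rw [Pi.single_eq_same] at hkk
      by_cases hki : k = i
      · subst hki
        left
        refine ⟨hk, omega_up (hσ k hk) hak ?_⟩
        simpa [Pi.single_apply, hne] using hkk
      · by_cases hkj : k = j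
        · subst hkj
          right
          refine ⟨hk, omega_up (hσ k hk) hak ?_⟩
          simpa [Pi.single_apply, Ne.symm hne] using hkk
        · exfalso
          have : (Pi.single i t + Pi.single j t : Fin d → ℝ) k = 0 := by
            simp [Pi.single_apply, hki, hkj]
          linarith [hkk, this.symm ▸ hkk]
    constructor
    · intro i j hij
      obtain ⟨t, ht⟩ := omega_nonempty (hw i j hij)
      rcases key i j hij t ht with ⟨hi, _⟩ | ⟨hj, _⟩
      · exact Or.inl hi
      · exact Or.inr hj
    · intro i j hij
      by_cases hi : i ∈ W
      · by_cases hj : j ∈ W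
        · rcases omega_total (hσ i hi) (hσ j hj) with hss | hss
          · right
            refine ⟨hj, fun t ht => ?_⟩
            rcases key i j hij t ht with ⟨_, h1⟩ | ⟨_, h1⟩
            · exact hss h1
            · exact h1
          · left
            refine ⟨hi, fun t ht => ?_⟩
            rcases key i j hij t ht with ⟨_, h1⟩ | ⟨_, h1⟩
            · exact h1
            · exact hss h1
        · left
          refine ⟨hi, fun t ht => ?_⟩
          rcases key i j hij t ht with ⟨_, h1⟩ | ⟨h1, _⟩
          · exact h1
          · exact absurd h1 hj
      · right
        by_cases hj : j ∈ W
        · refine ⟨hj, fun t ht => ?_⟩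
          rcases key i j hij t ht with ⟨h1, _⟩ | ⟨_, h1⟩
          · exact absurd h1 hi
          · exact h1
        · exfalso
          obtain ⟨t, ht⟩ := omega_nonempty (hw i j hij)
          rcases key i j hij t ht with ⟨h1, _⟩ | ⟨h1, _⟩
          · exact hi h1
          · exact hj h1
  · rintro ⟨_, hcov⟩ s ⟨x, ⟨i, j, t, hij, ht, rfl⟩, u, hu, rfl⟩
    have htpos : 0 < t := omega_pos (hw i j hij) ht
    rcases hcov i j hij with ⟨hi, hsub⟩ | ⟨hj, hsub⟩
    · refine ⟨Pi.single i t, ⟨i, hi, t, hsub ht, rfl⟩, Pi.single j t + u, ?_, ?_⟩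
      · intro k
        have : (0:ℝ) ≤ (Pi.single j t : Fin d → ℝ) k := by
          rcases eq_or_ne k j with rfl | hkj
          · simpa using htpos.le
          · simp [Pi.single_apply, hkj]
        have := hu k
        simp only [Pi.add_apply]
        linarith
      · rw [add_assoc]
    · refine ⟨Pi.single j t, ⟨j, hj, t, hsub ht, rfl⟩, Pi.single i t + u, ?_, ?_⟩
      · intro k
        have : (0:ℝ) ≤ (Pi.single i t : Fin d → ℝ) k := by
          rcases eq_or_ne k i with rfl | hki
          · simpa using htpos.le
          · simp [Pi.single_apply, hki]
        have := hu k
        simp only [Pi.add_apply]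
        linarith
      · abel
end

section
/- With notation as follows: S = \mathbb{R}_{\geq 0}^d, \Omega = { (a,\infty) : a \geq 0 } \cup { [b,\infty) : b > 0 }, and for W \subseteq {1,...,d} and \sigma : W \to \Omega, Q_{W,\sigma} = Up({ a e_i : i \in W, a \in \sigma(i) }). Then for pairs (W,\sigma) and (W',\sigma'), one has Q_{W,\sigma} \subseteq Q_{W',\sigma'} if and only if W \subseteq W' and \sigma(i) \subseteq \sigma'(i) for all i \in W. -/
namespace IsOmega

variable {A : Set ℝ}

lemma pos (hA : IsOmega A) {a : ℝ} (ha : a ∈ A) : 0 < a := by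
  rcases hA with ⟨c, hc, rfl⟩ | ⟨c, hc, rfl⟩
  · exact hc.trans_lt ha
  · exact hc.trans_le ha

lemma mem_of_le (hA : IsOmega A) {a b : ℝ} (ha : a ∈ A) (hab : a ≤ b) : b ∈ A := by
  rcases hA with ⟨c, -, rfl⟩ | ⟨c, -, rfl⟩
  · exact ha.trans_le hab
  · exact le_trans ha hab

lemma nonempty (hA : IsOmega A) : A.Nonempty := by
  rcases hA with ⟨c, -, rfl⟩ | ⟨c, -, rfl⟩
  · exact Set.nonempty_Ioi
  · exact Set.nonempty_Ici

end IsOmega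

section UpN

variable {d : ℕ} {T T' : Set (Fin d → ℝ)}

lemma subset_UpN : T ⊆ UpN d T :=
  fun t ht => ⟨t, ht, 0, fun _ => le_rfl, (add_zero t).symm⟩

lemma UpN_mono (h : T ⊆ T') : UpN d T ⊆ UpN d T' := by
  rintro _ ⟨t, ht, u, hu, rfl⟩
  exact ⟨t, h ht, u, hu, rfl⟩

end UpN

section QWsigma

variable {d : ℕ} {W W' : Finset (Fin d)} {σ σ' : Fin d → Set ℝ}

lemma QWsigma_mono (hW : W ⊆ W') (hσ : ∀ i ∈ W, σ i ⊆ σ' i) :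
    QWsigma d W σ ⊆ QWsigma d W' σ' := by
  refine UpN_mono ?_
  rintro _ ⟨i, hi, a, ha, rfl⟩
  exact ⟨i, hW hi, a, hσ i hi ha, rfl⟩

lemma single_mem_QWsigma_iff (hσ : ∀ i ∈ W, IsOmega (σ i)) {i : Fin d} {a : ℝ} :
    Pi.single i a ∈ QWsigma d W σ ↔ i ∈ W ∧ a ∈ σ i := by
  refine ⟨?_, fun ⟨hi, ha⟩ => subset_UpN ⟨i, hi, a, ha, rfl⟩⟩
  rintro ⟨_, ⟨j, hj, b, hb, rfl⟩, u, hu, heq⟩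
  -- Read off coordinate `j`: `(single i a) j = b + u j ≥ b > 0`, so `j = i` and `b ≤ a`.
  have hcoord : (Pi.single i a : Fin d → ℝ) j = b + u j := by
    rw [heq, Pi.add_apply, Pi.single_eq_same]
  have hb_pos : 0 < b := (hσ j hj).pos hb
  obtain rfl : j = i := by
    by_contra hji
    rw [Pi.single_eq_of_ne hji] at hcoord
    linarith [hu j]
  rw [Pi.single_eq_same] at hcoord
  exact ⟨hj, (hσ j hj).mem_of_le hb (by linarith [hu j])⟩

end QWsigma

/-- `Q_{W,σ} ⊆ Q_{W',σ'}` iff `W ⊆ W'` and `σ(i) ⊆ σ'(i)` for all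
`i ∈ W` (Lemma 5.14(a)). -/
theorem stmt18 (d : ℕ) (W W' : Finset (Fin d)) (σ σ' : Fin d → Set ℝ)
    (hσ : ∀ i ∈ W, IsOmega (σ i)) (hσ' : ∀ i ∈ W', IsOmega (σ' i)) :
    QWsigma d W σ ⊆ QWsigma d W' σ' ↔ (W ⊆ W' ∧ ∀ i ∈ W, σ i ⊆ σ' i) := by
  refine ⟨fun h => ?_, fun ⟨hW, hσσ'⟩ => QWsigma_mono hW hσσ'⟩
  have hsingle : ∀ i ∈ W, ∀ a ∈ σ i, i ∈ W' ∧ a ∈ σ' i := fun i hi a ha =>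
    (single_mem_QWsigma_iff hσ').1 (h ((single_mem_QWsigma_iff hσ).2 ⟨hi, ha⟩))
  refine ⟨fun i hi => ?_, fun i hi a ha => (hsingle i hi a ha).2⟩
  obtain ⟨a, ha⟩ := (hσ i hi).nonempty
  exact (hsingle i hi a ha).1
end

section
/- Work in S = \mathbb{R}_{\geq 0}^d with \Gamma, S(ij), I, and interval vertex covers as in the edge-ideal setting: I = Up({ t e_i + t e_j : ij \in E, t \in S(ij) }) with E nonempty and each S(ij) \in \Omega. Then I = \bigcap_{(W,\sigma)} Q_{W,\sigma}, where the intersection is over all interval vertex covers (W, \sigma) of (\Gamma, S). Concretely: s \in I if and only if for every interval vertex cover (W,\sigma), there exists i \in W and a \in \sigma(i) with s_i \geq a. -/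
/-!
If `s ∉ I`, then on every edge `ij` each `t ∈ S(ij)` exceeds `min (s i) (s j)`, so giving
every vertex the interval `σ(i) = (s i, ∞)` yields an interval vertex cover with `s ∉ Q_{W,σ}`.
Conversely, a generator `t eᵢ + t eⱼ ≤ s` of `I` lies in every `Q_{W,σ}`, witnessed by
whichever endpoint of `ij` has `S(ij) ⊆ σ`.
-/

lemma mem_UpN_iff {d : ℕ} {T : Set (Fin d → ℝ)} {s : Fin d → ℝ} :
    s ∈ UpN d T ↔ ∃ t ∈ T, t ≤ s := by
  constructor
  · rintro ⟨t, ht, u, hu, rfl⟩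
    exact ⟨t, ht, le_add_of_nonneg_right hu⟩
  · rintro ⟨t, ht, hts⟩
    exact ⟨t, ht, s - t, fun k => sub_nonneg.mpr (hts k), (add_sub_cancel t s).symm⟩

lemma single_add_single_le_iff {d : ℕ} {s : Fin d → ℝ} (hs : s ∈ Snn d) {i j : Fin d}
    (hij : i ≠ j) {t : ℝ} :
    Pi.single i t + Pi.single j t ≤ s ↔ t ≤ s i ∧ t ≤ s j := by
  constructor
  · intro h
    constructor
    · simpa [Pi.single_apply, hij] using h i
    · simpa [Pi.single_apply, hij.symm] using h j
  · rintro ⟨hi, hj⟩ k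
    by_cases hki : k = i
    · subst hki; simpa [Pi.single_apply, hij] using hi
    by_cases hkj : k = j
    · subst hkj; simpa [Pi.single_apply, hki] using hj
    simpa [Pi.single_apply, hki, hkj] using hs k

lemma mem_edgeIdealSet_iff {d : ℕ} {G : SimpleGraph (Fin d)} {w : Fin d → Fin d → Set ℝ}
    {s : Fin d → ℝ} (hs : s ∈ Snn d) :
    s ∈ edgeIdealSet d G w ↔
      ∃ i j, G.Adj i j ∧ ∃ t ∈ w i j, t ≤ s i ∧ t ≤ s j := by
  rw [edgeIdealSet, mem_UpN_iff]
  constructor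
  · rintro ⟨_, ⟨i, j, t, hadj, ht, rfl⟩, hle⟩
    exact ⟨i, j, hadj, t, ht, (single_add_single_le_iff hs hadj.ne).mp hle⟩
  · rintro ⟨i, j, hadj, t, ht, hle⟩
    exact ⟨_, ⟨i, j, t, hadj, ht, rfl⟩, (single_add_single_le_iff hs hadj.ne).mpr hle⟩

lemma IsIVC.exists_le_of_mem_edgeIdealSet {d : ℕ} {G : SimpleGraph (Fin d)}
    {w : Fin d → Fin d → Set ℝ} {W : Finset (Fin d)} {σ : Fin d → Set ℝ}
    (hWσ : IsIVC d G w W σ) {s : Fin d → ℝ} (hs : s ∈ Snn d)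
    (hsI : s ∈ edgeIdealSet d G w) :
    ∃ i ∈ W, ∃ a ∈ σ i, a ≤ s i := by
  obtain ⟨i, j, hadj, t, ht, hti, htj⟩ := (mem_edgeIdealSet_iff hs).mp hsI
  rcases hWσ.2 i j hadj with ⟨hiW, hsub⟩ | ⟨hjW, hsub⟩
  · exact ⟨i, hiW, t, hsub ht, hti⟩
  · exact ⟨j, hjW, t, hsub ht, htj⟩

lemma isIVC_univ_Ioi_of_notMem_edgeIdealSet {d : ℕ} {G : SimpleGraph (Fin d)}
    {w : Fin d → Fin d → Set ℝ} {s : Fin d → ℝ} (hs : s ∈ Snn d)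
    (hsI : s ∉ edgeIdealSet d G w) :
    IsIVC d G w Finset.univ (fun i => Set.Ioi (s i)) := by
  have hmin : ∀ i j, G.Adj i j → ∀ t ∈ w i j, min (s i) (s j) < t := fun i j hadj t ht =>
    not_le.mp fun h => hsI ((mem_edgeIdealSet_iff hs).mpr ⟨i, j, hadj, t, ht, le_min_iff.mp h⟩)
  refine ⟨fun i _ _ => Or.inl (Finset.mem_univ i), fun i j hadj => ?_⟩
  rcases le_total (s i) (s j) with hij | hji
  · exact Or.inl ⟨Finset.mem_univ i, fun t ht =>
      (min_eq_left hij).symm.trans_lt (hmin i j hadj t ht)⟩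
  · exact Or.inr ⟨Finset.mem_univ j, fun t ht =>
      (min_eq_right hji).symm.trans_lt (hmin i j hadj t ht)⟩

theorem stmt19_general (d : ℕ) (G : SimpleGraph (Fin d))
    (w : Fin d → Fin d → Set ℝ) :
    ∀ s ∈ Snn d, (s ∈ edgeIdealSet d G w ↔
      ∀ (W : Finset (Fin d)) (σ : Fin d → Set ℝ), (∀ i ∈ W, IsOmega (σ i)) →
        IsIVC d G w W σ → ∃ i ∈ W, ∃ a ∈ σ i, a ≤ s i) := by
  intro s hs
  refine ⟨fun hsI W σ _ hWσ => hWσ.exists_le_of_mem_edgeIdealSet hs hsI, fun h => ?_⟩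
  by_contra hsI
  obtain ⟨i, -, a, hsa, has⟩ := h Finset.univ (fun i => Set.Ioi (s i))
    (fun i _ => Or.inl ⟨s i, hs i, rfl⟩) (isIVC_univ_Ioi_of_notMem_edgeIdealSet hs hsI)
  exact (not_le.mpr hsa) has

/-- `I = ⋂_{(W,σ)} Q_{W,σ}` over all interval vertex covers:
for `s ∈ S`, `s ∈ I` iff every interval vertex cover `(W,σ)` admits `i ∈ W` and
`a ∈ σ(i)` with `s i ≥ a` (first equality of Theorem thm130513a). -/
theorem stmt19 (d : ℕ) (G : SimpleGraph (Fin d)) (hE : ∃ i j, G.Adj i j)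
    (w : Fin d → Fin d → Set ℝ)
    (hw : ∀ i j, G.Adj i j → IsOmega (w i j)) (hwsymm : ∀ i j, w i j = w j i) :
    ∀ s ∈ Snn d, (s ∈ edgeIdealSet d G w ↔
      ∀ (W : Finset (Fin d)) (σ : Fin d → Set ℝ), (∀ i ∈ W, IsOmega (σ i)) →
        IsIVC d G w W σ → ∃ i ∈ W, ∃ a ∈ σ i, a ≤ s i) :=
  stmt19_general d G w
end
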